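/- Let h₁ and h₂ be two symmetric kernels of respective sizes p₁×q₁ and p₂×q₂ with E[h₁(Y_{𝐢,𝐣})²] < ∞ and E[h₂(Y_{𝐢,𝐣})²] < ∞. Let (0,0) ≤ (r₁,c₁) ≤ (p₁,q₁) and (0,0) ≤ (r₂,c₂) ≤ (p₂,q₂) with (r₁,c₁) ≠ (r₂,c₂), and let 𝐢₁,𝐣₁ be finite index sets of sizes r₁,c₁ and 𝐢₂,𝐣₂ of sizes r₂,c₂. Then Cov(p^{r₁,c₁}h₁(Y_{𝐢₁,𝐣₁}), p^{r₂,c₂}h₂(Y_{𝐢₂,𝐣₂})) = 0. -/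

import Mathlib

open MeasureTheory ProbabilityTheory Filter
open scoped BigOperators NNReal Topology

noncomputable section

namespace RCEU

variable {Ω : Type*}

/-- The `a`-th element of the finite set `I ⊂ ℕ`, in increasing order
(junk value `0` when out of range). -/
def nth (I : Finset ℕ) (a : ℕ) : ℕ := (I.sort (· ≤ ·)).getD a 0

/-- A kernel applied to the submatrix of `Y` with rows `I` and columns `J`,
taken in increasing order: `h(Y_{I,J})`. -/
def ker {p q : ℕ} (h : (Fin p → Fin q → ℝ) → ℝ) (Y : ℕ → ℕ → Ω → ℝ)
    (I J : Finset ℕ) (ω : Ω) : ℝ :=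
  h fun a b => Y (nth I a) (nth J b) ω

/-- A symmetric kernel of size `p × q`: a measurable function of `p × q` real matrices,
invariant under all permutations of the rows and of the columns of its argument. -/
def SymKernel (p q : ℕ) (h : (Fin p → Fin q → ℝ) → ℝ) : Prop :=
  Measurable h ∧
    ∀ (M : Fin p → Fin q → ℝ) (σ : Equiv.Perm (Fin p)) (τ : Equiv.Perm (Fin q)),
      h (fun a b => M (σ a) (τ b)) = h M

/-- The σ-algebra `A_{I,J}` generated by the latent variables `(ξ_i)_{i ∈ I}`,
`(η_j)_{j ∈ J}` and `(ζ_{ij})_{i ∈ I, j ∈ J}`. -/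
def latentAlg [MeasurableSpace Ω] (ξ η : ℕ → Ω → ℝ) (ζ : ℕ → ℕ → Ω → ℝ)
    (I J : Finset ℕ) : MeasurableSpace Ω :=
  (⨆ i ∈ I, MeasurableSpace.comap (ξ i) inferInstance) ⊔
    (⨆ j ∈ J, MeasurableSpace.comap (η j) inferInstance) ⊔
    (⨆ i ∈ I, ⨆ j ∈ J, MeasurableSpace.comap (ζ i j) inferInstance)

/-- The Aldous–Hoover–Kallenberg representation of a dissociated RCE matrix `Y`:
`(ξ_i)`, `(η_j)`, `(ζ_{ij})` are mutually independent families of i.i.d. random variables,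
each uniform on `[0,1]`, and `Y i j = φ (ξ i) (η j) (ζ i j)` for a measurable `φ`. -/
structure Model [MeasurableSpace Ω] (μ : Measure Ω) (ξ η : ℕ → Ω → ℝ)
    (ζ : ℕ → ℕ → Ω → ℝ) (φ : ℝ → ℝ → ℝ → ℝ) (Y : ℕ → ℕ → Ω → ℝ) : Prop where
  meas_ξ : ∀ i, Measurable (ξ i)
  meas_η : ∀ j, Measurable (η j)
  meas_ζ : ∀ i j, Measurable (ζ i j)
  indep : iIndepFun
    (Sum.elim ξ (Sum.elim η fun ij : ℕ × ℕ => ζ ij.1 ij.2)) μ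
  unif_ξ : ∀ i, μ.map (ξ i) = volume.restrict (Set.Icc (0 : ℝ) 1)
  unif_η : ∀ j, μ.map (η j) = volume.restrict (Set.Icc (0 : ℝ) 1)
  unif_ζ : ∀ i j, μ.map (ζ i j) = volume.restrict (Set.Icc (0 : ℝ) 1)
  meas_φ : Measurable fun t : ℝ × ℝ × ℝ => φ t.1 t.2.1 t.2.2
  Y_eq : ∀ i j ω, Y i j ω = φ (ξ i ω) (η j ω) (ζ i j ω)

/-- Covariance of two real random variables. -/
def covar [MeasurableSpace Ω] (μ : Measure Ω) (f g : Ω → ℝ) : ℝ :=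
  ∫ ω, (f ω - ∫ x, f x ∂μ) * (g ω - ∫ x, g x ∂μ) ∂μ

/-- `ψ` is the family of conditional expectations `ψ^{r,c}h(Y_{I',J'})`:
for any `I ⊇ I'` of size `p` and `J ⊇ J'` of size `q`,
`ψ I' J' = E[h(Y_{I,J}) | A_{I',J'}]` a.s. (independently of the choice of `I`, `J`). -/
def IsCondExpFamily [MeasurableSpace Ω] (μ : Measure Ω) (ξ η : ℕ → Ω → ℝ)
    (ζ : ℕ → ℕ → Ω → ℝ) {p q : ℕ} (h : (Fin p → Fin q → ℝ) → ℝ)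
    (Y : ℕ → ℕ → Ω → ℝ) (ψ : Finset ℕ → Finset ℕ → Ω → ℝ) : Prop :=
  ∀ (I' J' I J : Finset ℕ), I.card = p → J.card = q → I' ⊆ I → J' ⊆ J →
    ψ I' J' =ᵐ[μ] μ[ker h Y I J | latentAlg ξ η ζ I' J']

/-- `ψ₁ i` is the conditional expectation `ψ^{1,0}h(Y_{{i},∅}) = E[h(Y_{I,J}) | ξ_i]`,
for any `I ∋ i` of size `p` and any `J` of size `q`. -/
def IsRowCondExp [MeasurableSpace Ω] (μ : Measure Ω) (ξ η : ℕ → Ω → ℝ)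
    (ζ : ℕ → ℕ → Ω → ℝ) {p q : ℕ} (h : (Fin p → Fin q → ℝ) → ℝ)
    (Y : ℕ → ℕ → Ω → ℝ) (ψ₁ : ℕ → Ω → ℝ) : Prop :=
  ∀ (i : ℕ) (I J : Finset ℕ), I.card = p → J.card = q → i ∈ I →
    ψ₁ i =ᵐ[μ] μ[ker h Y I J | latentAlg ξ η ζ {i} ∅]

/-- `ψ₂ j` is the conditional expectation `ψ^{0,1}h(Y_{∅,{j}}) = E[h(Y_{I,J}) | η_j]`,
for any `I` of size `p` and any `J ∋ j` of size `q`. -/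
def IsColCondExp [MeasurableSpace Ω] (μ : Measure Ω) (ξ η : ℕ → Ω → ℝ)
    (ζ : ℕ → ℕ → Ω → ℝ) {p q : ℕ} (h : (Fin p → Fin q → ℝ) → ℝ)
    (Y : ℕ → ℕ → Ω → ℝ) (ψ₂ : ℕ → Ω → ℝ) : Prop :=
  ∀ (j : ℕ) (I J : Finset ℕ), I.card = p → J.card = q → j ∈ J →
    ψ₂ j =ᵐ[μ] μ[ker h Y I J | latentAlg ξ η ζ ∅ {j}]

/-- The Hoeffding-type projection `p^{r,c}h(Y_{I,J})` built from the family `ψ` of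
conditional expectations, defined by the recursion
`p^{r,c}h(Y_{I,J}) = ψ^{r,c}h(Y_{I,J}) − Σ_{(I',J') ⊆ (I,J), (I',J') ≠ (I,J)} p^{r',c'}h(Y_{I',J'})`. -/
def proj (ψ : Finset ℕ → Finset ℕ → Ω → ℝ) : Finset ℕ → Finset ℕ → Ω → ℝ
  | I, J =>
    ψ I J - ∑ P ∈ ((I.powerset ×ˢ J.powerset).erase (I, J)).attach,
      proj ψ P.1.1 P.1.2
termination_by I J => I.card + J.card
decreasing_by
  obtain ⟨hne, hmem⟩ := Finset.mem_erase.mp P.2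
  rw [Finset.mem_product, Finset.mem_powerset, Finset.mem_powerset] at hmem
  rcases eq_or_ne P.1.1 I with h1 | h1
  · have h2 : P.1.2 ≠ J := fun h2 => hne (Prod.ext h1 h2)
    have hlt := Finset.card_lt_card (HasSubset.Subset.ssubset_of_ne hmem.2 h2)
    have hle := Finset.card_le_card hmem.1
    omega
  · have hlt := Finset.card_lt_card (HasSubset.Subset.ssubset_of_ne hmem.1 h1)
    have hle := Finset.card_le_card hmem.2
    omega

/-- The `U`-statistic `U^h_{m,n}(Y)` of kernel `h`. -/
def UStat {p q : ℕ} (h : (Fin p → Fin q → ℝ) → ℝ) (Y : ℕ → ℕ → Ω → ℝ)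
    (m n : ℕ) (ω : Ω) : ℝ :=
  (m.choose p : ℝ)⁻¹ * (n.choose q : ℝ)⁻¹ *
    ∑ I ∈ (Finset.range m).powersetCard p, ∑ J ∈ (Finset.range n).powersetCard q,
      ker h Y I J ω

/-- `P^{r,c}_{m,n}h(Y)`, the `U`-statistic of kernel `p^{r,c}h`. -/
def PStat (ψ : Finset ℕ → Finset ℕ → Ω → ℝ) (r c m n : ℕ) (ω : Ω) : ℝ :=
  (m.choose r : ℝ)⁻¹ * (n.choose c : ℝ)⁻¹ *
    ∑ I ∈ (Finset.range m).powersetCard r, ∑ J ∈ (Finset.range n).powersetCard c,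
      proj ψ I J ω

/-- The estimator `μ̂^{h,(i)}_N` of `ψ^{1,0}h(Y_{{i},∅})`: average of the kernel over all
`p × q` submatrices of the upper-left `m × n` corner whose row set contains `i`. -/
def muHat {p q : ℕ} (h : (Fin p → Fin q → ℝ) → ℝ) (Y : ℕ → ℕ → Ω → ℝ)
    (m n i : ℕ) (ω : Ω) : ℝ :=
  ((m - 1).choose (p - 1) : ℝ)⁻¹ * (n.choose q : ℝ)⁻¹ *
    ∑ I ∈ ((Finset.range m).powersetCard p).filter (fun I => i ∈ I),
      ∑ J ∈ (Finset.range n).powersetCard q, ker h Y I J ω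

/-- The estimator `ν̂^{h,(j)}_N` of `ψ^{0,1}h(Y_{∅,{j}})`. -/
def nuHat {p q : ℕ} (h : (Fin p → Fin q → ℝ) → ℝ) (Y : ℕ → ℕ → Ω → ℝ)
    (m n j : ℕ) (ω : Ω) : ℝ :=
  (m.choose p : ℝ)⁻¹ * ((n - 1).choose (q - 1) : ℝ)⁻¹ *
    ∑ I ∈ (Finset.range m).powersetCard p,
      ∑ J ∈ ((Finset.range n).powersetCard q).filter (fun J => j ∈ J), ker h Y I J ω

/-- The covariance estimator `ĉ^{h₁,h₂;1,0}_N`. -/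
def cHat10 {p q : ℕ} (h₁ h₂ : (Fin p → Fin q → ℝ) → ℝ) (Y : ℕ → ℕ → Ω → ℝ)
    (m n : ℕ) (ω : Ω) : ℝ :=
  (m.choose 2 : ℝ)⁻¹ *
    ∑ i₂ ∈ Finset.range m, ∑ i₁ ∈ Finset.range i₂,
      (muHat h₁ Y m n i₁ ω - muHat h₁ Y m n i₂ ω) *
        (muHat h₂ Y m n i₁ ω - muHat h₂ Y m n i₂ ω) / 2

/-- The covariance estimator `ĉ^{h₁,h₂;0,1}_N`. -/
def cHat01 {p q : ℕ} (h₁ h₂ : (Fin p → Fin q → ℝ) → ℝ) (Y : ℕ → ℕ → Ω → ℝ)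
    (m n : ℕ) (ω : Ω) : ℝ :=
  (n.choose 2 : ℝ)⁻¹ *
    ∑ j₂ ∈ Finset.range n, ∑ j₁ ∈ Finset.range j₂,
      (nuHat h₁ Y m n j₁ ω - nuHat h₁ Y m n j₂ ω) *
        (nuHat h₂ Y m n j₁ ω - nuHat h₂ Y m n j₂ ω) / 2

/-- The variance estimator `v̂^{h;1,0}_N`. -/
def vHat10 {p q : ℕ} (h : (Fin p → Fin q → ℝ) → ℝ) (Y : ℕ → ℕ → Ω → ℝ)
    (m n : ℕ) (ω : Ω) : ℝ :=
  (m.choose 2 : ℝ)⁻¹ *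
    ∑ i₂ ∈ Finset.range m, ∑ i₁ ∈ Finset.range i₂,
      (muHat h Y m n i₁ ω - muHat h Y m n i₂ ω) ^ 2 / 2

/-- The variance estimator `v̂^{h;0,1}_N`. -/
def vHat01 {p q : ℕ} (h : (Fin p → Fin q → ℝ) → ℝ) (Y : ℕ → ℕ → Ω → ℝ)
    (m n : ℕ) (ω : Ω) : ℝ :=
  (n.choose 2 : ℝ)⁻¹ *
    ∑ j₂ ∈ Finset.range n, ∑ j₁ ∈ Finset.range j₂,
      (nuHat h Y m n j₁ ω - nuHat h Y m n j₂ ω) ^ 2 / 2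

/-- The row-deleted `U`-statistic `U^{h,(−i,∅)}_N`. -/
def UStatRowDel {p q : ℕ} (h : (Fin p → Fin q → ℝ) → ℝ) (Y : ℕ → ℕ → Ω → ℝ)
    (m n i : ℕ) (ω : Ω) : ℝ :=
  ((m - 1).choose p : ℝ)⁻¹ * (n.choose q : ℝ)⁻¹ *
    ∑ I ∈ ((Finset.range m).erase i).powersetCard p,
      ∑ J ∈ (Finset.range n).powersetCard q, ker h Y I J ω

/-- The column-deleted `U`-statistic `U^{h,(∅,−j)}_N`. -/
def UStatColDel {p q : ℕ} (h : (Fin p → Fin q → ℝ) → ℝ) (Y : ℕ → ℕ → Ω → ℝ)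
    (m n j : ℕ) (ω : Ω) : ℝ :=
  (m.choose p : ℝ)⁻¹ * ((n - 1).choose q : ℝ)⁻¹ *
    ∑ I ∈ (Finset.range m).powersetCard p,
      ∑ J ∈ ((Finset.range n).erase j).powersetCard q, ker h Y I J ω

/-- The extension `h̃` of a kernel `h` of size `p × q` to the size `p' × q'`:
`h̃(M) = [C(p',p) C(q',q)]⁻¹ Σ_{A,B} h(M_{A,B})`, the sum running over all row subsets `A`
of size `p` and column subsets `B` of size `q`, taken in increasing order. -/
def extKer {p q : ℕ} (p' q' : ℕ) (h : (Fin p → Fin q → ℝ) → ℝ)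
    (M : Fin p' → Fin q' → ℝ) : ℝ :=
  (p'.choose p : ℝ)⁻¹ * (q'.choose q : ℝ)⁻¹ *
    ∑ A ∈ ((Finset.univ : Finset (Fin p')).powersetCard p).attach,
      ∑ B ∈ ((Finset.univ : Finset (Fin q')).powersetCard q).attach,
        h fun a b =>
          M (A.1.orderEmbOfFin (Finset.mem_powersetCard.mp A.2).2 a)
            (B.1.orderEmbOfFin (Finset.mem_powersetCard.mp B.2).2 b)

/-- Convergence in distribution of a sequence of random elements towards a law `G`:
convergence of the expectations of every bounded continuous function. -/
def TendstoInDist {E : Type*} [MeasurableSpace Ω] [TopologicalSpace E] [MeasurableSpace E]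
    (μ : Measure Ω) (X : ℕ → Ω → E) (G : Measure E) : Prop :=
  ∀ f : BoundedContinuousFunction E ℝ,
    Tendsto (fun N => ∫ ω, f (X N ω) ∂μ) atTop (𝓝 (∫ x, f x ∂G))

section AuxMeasure

lemma aux_setIntegral_inter {m₁ m₂ : MeasurableSpace Ω} [m0 : MeasurableSpace Ω]
    {μ : Measure Ω} [IsProbabilityMeasure μ] (h1 : m₁ ≤ m0) (h2 : m₂ ≤ m0)
    (hindep : Indep m₁ m₂ μ) {f : Ω → ℝ} (hf : Integrable f μ)
    (hfm : StronglyMeasurable[m₁] f) {A B : Set Ω}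
    (hA : MeasurableSet[m₁] A) (hB : MeasurableSet[m₂] B) :
    ∫ x in A ∩ B, f x ∂μ = (μ B).toReal • ∫ x in A, f x ∂μ := by
  haveI : SigmaFinite (μ.trim h2) := inferInstance
  have hgm : StronglyMeasurable[m₁] (A.indicator f) := hfm.indicator hA
  have hgi : Integrable (A.indicator f) μ := hf.indicator (h1 A hA)
  have hce : μ[A.indicator f | m₂] =ᵐ[μ] fun _ => ∫ x, A.indicator f x ∂μ :=
    condExp_indep_eq h1 h2 hgm hindep
  rw [Set.inter_comm, ← setIntegral_indicator (h1 A hA),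
    ← setIntegral_condExp h2 hgi hB, integral_congr_ae (ae_restrict_of_ae hce),
    setIntegral_const, integral_indicator (h1 A hA), measureReal_def]

lemma aux_condexp_sup {m₁ m₂ mc : MeasurableSpace Ω} [m0 : MeasurableSpace Ω]
    {μ : Measure Ω} [IsProbabilityMeasure μ] (h1 : m₁ ≤ m0) (h2 : m₂ ≤ m0)
    (hc1 : mc ≤ m₁) (hindep : Indep m₁ m₂ μ) {f : Ω → ℝ}
    (hf : Integrable f μ) (hfm : StronglyMeasurable[m₁] f) :
    μ[f | mc ⊔ m₂] =ᵐ[μ] μ[f | mc] := by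
  have hcm0 : mc ≤ m0 := hc1.trans h1
  have hm : mc ⊔ m₂ ≤ m0 := sup_le hcm0 h2
  haveI : SigmaFinite (μ.trim hm) := inferInstance
  haveI : SigmaFinite (μ.trim hcm0) := inferInstance
  set g := μ[f | mc] with hgdef
  have hgm : StronglyMeasurable[mc] g := stronglyMeasurable_condExp
  have hgi : Integrable g μ := integrable_condExp
  set S : Set (Set Ω) := {s | ∃ A B, MeasurableSet[mc] A ∧ MeasurableSet[m₂] B ∧ s = A ∩ B}
    with hS
  have h_eq : (mc ⊔ m₂) = MeasurableSpace.generateFrom S := by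
    refine le_antisymm (sup_le ?_ ?_) (MeasurableSpace.generateFrom_le ?_)
    · intro s hs
      exact MeasurableSpace.measurableSet_generateFrom
        ⟨s, Set.univ, hs, @MeasurableSet.univ _ m₂, (Set.inter_univ s).symm⟩
    · intro s hs
      exact MeasurableSpace.measurableSet_generateFrom
        ⟨Set.univ, s, @MeasurableSet.univ _ mc, hs, (Set.univ_inter s).symm⟩
    · rintro t ⟨A, B, hA, hB, rfl⟩
      exact MeasurableSet.inter ((le_sup_left : mc ≤ mc ⊔ m₂) A hA)
        ((le_sup_right : m₂ ≤ mc ⊔ m₂) B hB)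
  have h_pi : IsPiSystem S := by
    rintro _ ⟨A₁, B₁, hA₁, hB₁, rfl⟩ _ ⟨A₂, B₂, hA₂, hB₂, rfl⟩ -
    exact ⟨A₁ ∩ A₂, B₁ ∩ B₂, hA₁.inter hA₂, hB₁.inter hB₂, by
      rw [Set.inter_inter_inter_comm]⟩
  have hindc : Indep mc m₂ μ := indep_of_indep_of_le_left hindep hc1
  have key : ∀ ⦃s : Set Ω⦄, MeasurableSet[mc ⊔ m₂] s →
      ∫ x in s, g x ∂μ = ∫ x in s, f x ∂μ := by
    refine MeasurableSpace.induction_on_inter (m := mc ⊔ m₂) h_eq h_pi ?_ ?_ ?_ ?_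
    · simp
    · rintro _ ⟨A, B, hA, hB, rfl⟩
      rw [aux_setIntegral_inter hcm0 h2 hindc hgi hgm hA hB,
        aux_setIntegral_inter h1 h2 hindep hf hfm (hc1 A hA) hB,
        setIntegral_condExp hcm0 hf hA]
    · intro t ht hC
      have htm : MeasurableSet[m0] t := hm t ht
      have e1 := integral_add_compl htm hgi (μ := μ)
      have e2 := integral_add_compl htm hf (μ := μ)
      have e3 : ∫ x, g x ∂μ = ∫ x, f x ∂μ := integral_condExp hcm0
      linarith
    · intro t hd htm hC
      rw [integral_iUnion (fun i => hm _ (htm i)) hd hgi.integrableOn,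
        integral_iUnion (fun i => hm _ (htm i)) hd hf.integrableOn]
      exact tsum_congr hC
  exact (ae_eq_condExp_of_forall_setIntegral_eq hm hf
    (fun s _ _ => hgi.integrableOn) (fun s hs _ => key hs)
    ⟨g, hgm.mono le_sup_left, EventuallyEq.rfl⟩).symm

lemma sum_ae_eq {α : Type*} [MeasurableSpace Ω] {μ : Measure Ω} (t : Finset α)
    (f g : α → Ω → ℝ) (hfg : ∀ i ∈ t, f i =ᵐ[μ] g i) :
    (∑ i ∈ t, f i) =ᵐ[μ] ∑ i ∈ t, g i := by
  classical
  revert hfg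
  induction t using Finset.induction_on with
  | empty => intro _; simp
  | @insert a t ha ih =>
    intro hfg
    rw [Finset.sum_insert ha, Finset.sum_insert ha]
    exact (hfg a (Finset.mem_insert_self a t)).add
      (ih fun i hi => hfg i (Finset.mem_insert_of_mem hi))

lemma covar_comm [MeasurableSpace Ω] {μ : Measure Ω} (f g : Ω → ℝ) :
    covar μ f g = covar μ g f := by
  unfold covar
  exact integral_congr_ae (Filter.Eventually.of_forall fun ω => mul_comm _ _)

end AuxMeasure

section Latent

/-- The index type for the latent variables. -/
def lIdx (I J : Finset ℕ) : Set (ℕ ⊕ (ℕ ⊕ ℕ × ℕ)) :=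
  {t | Sum.elim (· ∈ I) (Sum.elim (· ∈ J) fun ij => ij.1 ∈ I ∧ ij.2 ∈ J) t}

/-- The σ-algebra generated by a single latent variable. -/
def lGen [MeasurableSpace Ω] (ξ η : ℕ → Ω → ℝ) (ζ : ℕ → ℕ → Ω → ℝ)
    (t : ℕ ⊕ (ℕ ⊕ ℕ × ℕ)) : MeasurableSpace Ω :=
  MeasurableSpace.comap (Sum.elim ξ (Sum.elim η fun ij : ℕ × ℕ => ζ ij.1 ij.2) t) inferInstance

variable [mΩ : MeasurableSpace Ω] {μ : Measure Ω} [IsProbabilityMeasure μ]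
  {ξ η : ℕ → Ω → ℝ} {ζ : ℕ → ℕ → Ω → ℝ} {φ : ℝ → ℝ → ℝ → ℝ} {Y : ℕ → ℕ → Ω → ℝ}

lemma latent_eq (ξ η : ℕ → Ω → ℝ) (ζ : ℕ → ℕ → Ω → ℝ) (I J : Finset ℕ) :
    latentAlg ξ η ζ I J = ⨆ t ∈ lIdx I J, lGen ξ η ζ t := by
  apply le_antisymm
  · refine sup_le (sup_le ?_ ?_) ?_
    · exact iSup₂_le fun i hi => le_iSup₂_of_le (Sum.inl i) hi le_rfl
    · exact iSup₂_le fun j hj => le_iSup₂_of_le (Sum.inr (Sum.inl j)) hj le_rfl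
    · exact iSup₂_le fun i hi => iSup₂_le fun j hj =>
        le_iSup₂_of_le (Sum.inr (Sum.inr (i, j))) ⟨hi, hj⟩ le_rfl
  · refine iSup₂_le fun t ht => ?_
    rcases t with i | j | ⟨i, j⟩
    · exact le_sup_of_le_left (le_sup_of_le_left
        (le_iSup₂ (f := fun i (_ : i ∈ I) => MeasurableSpace.comap (ξ i) inferInstance) i ht))
    · exact le_sup_of_le_left (le_sup_of_le_right
        (le_iSup₂ (f := fun j (_ : j ∈ J) => MeasurableSpace.comap (η j) inferInstance) j ht))
    · exact le_sup_of_le_right (le_iSup₂_of_le i ht.1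
        (le_iSup₂ (f := fun j (_ : j ∈ J) => MeasurableSpace.comap (ζ i j) inferInstance) j ht.2))

lemma lGen_le (hmodel : Model μ ξ η ζ φ Y) (t : ℕ ⊕ (ℕ ⊕ ℕ × ℕ)) :
    lGen ξ η ζ t ≤ mΩ := by
  rcases t with i | j | ⟨i, j⟩
  · exact (hmodel.meas_ξ i).comap_le
  · exact (hmodel.meas_η j).comap_le
  · exact (hmodel.meas_ζ i j).comap_le

lemma latentAlg_le (hmodel : Model μ ξ η ζ φ Y) (I J : Finset ℕ) :
    latentAlg ξ η ζ I J ≤ mΩ := by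
  rw [latent_eq]
  exact iSup₂_le fun t _ => lGen_le hmodel t

lemma latentAlg_mono {I J I' J' : Finset ℕ} (hI : I ⊆ I') (hJ : J ⊆ J') :
    latentAlg ξ η ζ I J ≤ latentAlg ξ η ζ I' J' := by
  rw [latent_eq, latent_eq]
  refine biSup_mono fun t ht => ?_
  rcases t with i | j | ⟨i, j⟩
  · exact hI ht
  · exact hJ ht
  · exact ⟨hI ht.1, hJ ht.2⟩

lemma lIdx_inter (I J K L : Finset ℕ) :
    lIdx (I ∩ K) (J ∩ L) = lIdx I J ∩ lIdx K L := by
  ext t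
  rcases t with i | j | ⟨i, j⟩ <;>
    simp [lIdx, Finset.mem_inter] <;> tauto

lemma latent_split (ξ η : ℕ → Ω → ℝ) (ζ : ℕ → ℕ → Ω → ℝ) (I J K L : Finset ℕ) :
    latentAlg ξ η ζ K L =
      latentAlg ξ η ζ (I ∩ K) (J ∩ L) ⊔ ⨆ t ∈ lIdx K L \ lIdx I J, lGen ξ η ζ t := by
  rw [latent_eq ξ η ζ K L, latent_eq ξ η ζ (I ∩ K) (J ∩ L), lIdx_inter, ← iSup_union]
  congr 1
  rw [Set.inter_comm, Set.inter_union_diff]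

lemma latent_indep (hmodel : Model μ ξ η ζ φ Y) (I J K L : Finset ℕ) :
    Indep (latentAlg ξ η ζ I J) (⨆ t ∈ lIdx K L \ lIdx I J, lGen ξ η ζ t) μ := by
  have hii : iIndep (lGen ξ η ζ) μ := hmodel.indep.iIndep
  have h := ProbabilityTheory.indep_biSup_compl (fun t => lGen_le hmodel t) hii (lIdx I J)
  rw [← latent_eq] at h
  exact indep_of_indep_of_le_right h (biSup_mono fun t ht => ht.2)

end Latent

section Kernel

variable [mΩ : MeasurableSpace Ω] {μ : Measure Ω} [IsProbabilityMeasure μ]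
  {ξ η : ℕ → Ω → ℝ} {ζ : ℕ → ℕ → Ω → ℝ} {φ : ℝ → ℝ → ℝ → ℝ} {Y : ℕ → ℕ → Ω → ℝ}
  {p q : ℕ} {h : (Fin p → Fin q → ℝ) → ℝ} {ψ : Finset ℕ → Finset ℕ → Ω → ℝ}

lemma mem_erase_aux {I J : Finset ℕ} {P : Finset ℕ × Finset ℕ}
    (hP : P ∈ (I.powerset ×ˢ J.powerset).erase (I, J)) :
    P.1 ⊆ I ∧ P.2 ⊆ J ∧ P.1.card + P.2.card < I.card + J.card := by
  obtain ⟨hne, hmem⟩ := Finset.mem_erase.mp hP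
  rw [Finset.mem_product, Finset.mem_powerset, Finset.mem_powerset] at hmem
  refine ⟨hmem.1, hmem.2, ?_⟩
  rcases eq_or_ne P.1 I with h1 | h1
  · have h2 : P.2 ≠ J := fun h2 => hne (Prod.ext h1 h2)
    have hlt := Finset.card_lt_card (HasSubset.Subset.ssubset_of_ne hmem.2 h2)
    have hle := Finset.card_le_card hmem.1
    omega
  · have hlt := Finset.card_lt_card (HasSubset.Subset.ssubset_of_ne hmem.1 h1)
    have hle := Finset.card_le_card hmem.2
    omega

lemma proj_eq (ψ : Finset ℕ → Finset ℕ → Ω → ℝ) (I J : Finset ℕ) :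
    proj ψ I J = ψ I J - ∑ P ∈ (I.powerset ×ˢ J.powerset).erase (I, J), proj ψ P.1 P.2 := by
  rw [proj]
  congr 1
  exact Finset.sum_attach ((I.powerset ×ˢ J.powerset).erase (I, J)) (fun P => proj ψ P.1 P.2)

lemma sum_proj (ψ : Finset ℕ → Finset ℕ → Ω → ℝ) (I J : Finset ℕ) :
    ∑ P ∈ I.powerset ×ˢ J.powerset, proj ψ P.1 P.2 = ψ I J := by
  have hmem : (I, J) ∈ I.powerset ×ˢ J.powerset := by
    simp [Finset.mem_product]
  rw [← Finset.add_sum_erase (I.powerset ×ˢ J.powerset) (fun P => proj ψ P.1 P.2) hmem,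
    proj_eq]
  abel

lemma proj_meas (hmodel : Model μ ξ η ζ φ Y) (hψ : IsCondExpFamily μ ξ η ζ h Y ψ) :
    ∀ (n : ℕ) (I J : Finset ℕ), I.card + J.card < n → I.card ≤ p → J.card ≤ q →
      ∃ g, StronglyMeasurable[latentAlg ξ η ζ I J] g ∧ Integrable g μ ∧
        proj ψ I J =ᵐ[μ] g := by
  intro n
  induction n with
  | zero => exact fun I J hn _ _ => absurd hn (by omega)
  | succ n ih =>
    intro I J hn hI hJ
    obtain ⟨I', hII', hI'⟩ := Infinite.exists_superset_card_eq I p hI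
    obtain ⟨J', hJJ', hJ'⟩ := Infinite.exists_superset_card_eq J q hJ
    have h1 : ψ I J =ᵐ[μ] μ[ker h Y I' J' | latentAlg ξ η ζ I J] :=
      hψ I J I' J' hI' hJ' hII' hJJ'
    have hP : ∀ P : {x // x ∈ (I.powerset ×ˢ J.powerset).erase (I, J)},
        P.1.1 ⊆ I ∧ P.1.2 ⊆ J ∧ P.1.1.card + P.1.2.card < I.card + J.card :=
      fun P => mem_erase_aux P.2
    choose g hg1 hg2 hg3 using fun P : {x // x ∈ (I.powerset ×ˢ J.powerset).erase (I, J)} =>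
      ih P.1.1 P.1.2 (by have := hP P; omega)
        (le_trans (Finset.card_le_card (hP P).1) hI)
        (le_trans (Finset.card_le_card (hP P).2.1) hJ)
    refine ⟨μ[ker h Y I' J' | latentAlg ξ η ζ I J] -
      ∑ P ∈ ((I.powerset ×ˢ J.powerset).erase (I, J)).attach, g P, ?_, ?_, ?_⟩
    · refine StronglyMeasurable.sub stronglyMeasurable_condExp ?_
      have he : (∑ P ∈ ((I.powerset ×ˢ J.powerset).erase (I, J)).attach, g P)
          = fun ω => ∑ P ∈ ((I.powerset ×ˢ J.powerset).erase (I, J)).attach, g P ω := by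
        funext ω
        exact Finset.sum_apply ω _ _
      rw [he]
      exact Finset.stronglyMeasurable_fun_sum _ fun P _ =>
        (hg1 P).mono (latentAlg_mono (hP P).1 (hP P).2.1)
    · exact Integrable.sub integrable_condExp (integrable_finset_sum' _ fun P _ => hg2 P)
    · rw [proj]
      exact h1.sub (sum_ae_eq _ _ _ fun P _ => hg3 P)

lemma condexp_psi (hmodel : Model μ ξ η ζ φ Y) (hψ : IsCondExpFamily μ ξ η ζ h Y ψ)
    (I J K L : Finset ℕ) (hI : I.card ≤ p) (hJ : J.card ≤ q) :
    μ[ψ I J | latentAlg ξ η ζ K L] =ᵐ[μ] ψ (I ∩ K) (J ∩ L) := by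
  obtain ⟨I', hII', hI'⟩ := Infinite.exists_superset_card_eq I p hI
  obtain ⟨J', hJJ', hJ'⟩ := Infinite.exists_superset_card_eq J q hJ
  have h1 : ψ I J =ᵐ[μ] μ[ker h Y I' J' | latentAlg ξ η ζ I J] :=
    hψ I J I' J' hI' hJ' hII' hJJ'
  have h2 : ψ (I ∩ K) (J ∩ L) =ᵐ[μ] μ[ker h Y I' J' | latentAlg ξ η ζ (I ∩ K) (J ∩ L)] :=
    hψ (I ∩ K) (J ∩ L) I' J' hI' hJ' (Finset.inter_subset_left.trans hII')
      (Finset.inter_subset_left.trans hJJ')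
  have hmono : latentAlg ξ η ζ (I ∩ K) (J ∩ L) ≤ latentAlg ξ η ζ I J :=
    latentAlg_mono Finset.inter_subset_left Finset.inter_subset_left
  calc μ[ψ I J | latentAlg ξ η ζ K L]
      =ᵐ[μ] μ[μ[ker h Y I' J' | latentAlg ξ η ζ I J] | latentAlg ξ η ζ K L] :=
        condExp_congr_ae h1
    _ =ᵐ[μ] μ[μ[ker h Y I' J' | latentAlg ξ η ζ I J] |
          latentAlg ξ η ζ (I ∩ K) (J ∩ L)] := by
        rw [latent_split ξ η ζ I J K L]
        exact aux_condexp_sup (latentAlg_le hmodel I J)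
          (iSup₂_le fun t _ => lGen_le hmodel t) hmono
          (latent_indep hmodel I J K L) integrable_condExp stronglyMeasurable_condExp
    _ =ᵐ[μ] μ[ker h Y I' J' | latentAlg ξ η ζ (I ∩ K) (J ∩ L)] := by
        haveI : SigmaFinite (μ.trim (latentAlg_le hmodel I J)) := inferInstance
        exact condExp_condExp_of_le hmono (latentAlg_le hmodel I J)
    _ =ᵐ[μ] ψ (I ∩ K) (J ∩ L) := h2.symm

lemma condexp_proj_zero (hmodel : Model μ ξ η ζ φ Y) (hψ : IsCondExpFamily μ ξ η ζ h Y ψ) :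
    ∀ (n : ℕ) (I J K L : Finset ℕ), I.card + J.card < n → I.card ≤ p → J.card ≤ q →
      ¬(I ⊆ K ∧ J ⊆ L) → μ[proj ψ I J | latentAlg ξ η ζ K L] =ᵐ[μ] 0 := by
  intro n
  induction n with
  | zero => exact fun I J K L hn _ _ _ => absurd hn (by omega)
  | succ n ih =>
    intro I J K L hn hI hJ hIK
    classical
    have hm : latentAlg ξ η ζ K L ≤ mΩ := latentAlg_le hmodel K L
    haveI : SigmaFinite (μ.trim hm) := inferInstance
    have hPmem : ∀ P ∈ (I.powerset ×ˢ J.powerset).erase (I, J),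
        P.1 ⊆ I ∧ P.2 ⊆ J ∧ P.1.card + P.2.card < I.card + J.card :=
      fun P hP => mem_erase_aux hP
    have hint : ∀ P ∈ (I.powerset ×ˢ J.powerset).erase (I, J),
        Integrable (proj ψ P.1 P.2) μ := by
      intro P hP
      obtain ⟨g, hg1, hg2, hg3⟩ := proj_meas hmodel hψ n P.1 P.2
        (by have := hPmem P hP; omega)
        (le_trans (Finset.card_le_card (hPmem P hP).1) hI)
        (le_trans (Finset.card_le_card (hPmem P hP).2.1) hJ)
      exact hg2.congr hg3.symm
    have hψint : Integrable (ψ I J) μ := by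
      obtain ⟨I', hII', hI'⟩ := Infinite.exists_superset_card_eq I p hI
      obtain ⟨J', hJJ', hJ'⟩ := Infinite.exists_superset_card_eq J q hJ
      exact integrable_condExp.congr (hψ I J I' J' hI' hJ' hII' hJJ').symm
    have key : ∀ P ∈ (I.powerset ×ˢ J.powerset).erase (I, J),
        μ[proj ψ P.1 P.2 | latentAlg ξ η ζ K L] =ᵐ[μ]
          (if P.1 ⊆ K ∧ P.2 ⊆ L then proj ψ P.1 P.2 else 0) := by
      intro P hP
      by_cases hc : P.1 ⊆ K ∧ P.2 ⊆ L
      · rw [if_pos hc]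
        obtain ⟨g, hg1, hg2, hg3⟩ := proj_meas hmodel hψ n P.1 P.2
          (by have := hPmem P hP; omega)
          (le_trans (Finset.card_le_card (hPmem P hP).1) hI)
          (le_trans (Finset.card_le_card (hPmem P hP).2.1) hJ)
        calc μ[proj ψ P.1 P.2 | latentAlg ξ η ζ K L]
            =ᵐ[μ] μ[g | latentAlg ξ η ζ K L] := condExp_congr_ae hg3
          _ = g := condExp_of_stronglyMeasurable hm
              (hg1.mono (latentAlg_mono hc.1 hc.2)) hg2
          _ =ᵐ[μ] proj ψ P.1 P.2 := hg3.symm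
      · rw [if_neg hc]
        exact ih P.1 P.2 K L (by have := hPmem P hP; omega)
          (le_trans (Finset.card_le_card (hPmem P hP).1) hI)
          (le_trans (Finset.card_le_card (hPmem P hP).2.1) hJ) hc
    have hset : ((I.powerset ×ˢ J.powerset).erase (I, J)).filter
        (fun P => P.1 ⊆ K ∧ P.2 ⊆ L) = (I ∩ K).powerset ×ˢ (J ∩ L).powerset := by
      ext P
      simp only [Finset.mem_filter, Finset.mem_erase, Finset.mem_product,
        Finset.mem_powerset, Finset.subset_inter_iff]
      constructor
      · rintro ⟨⟨hne, h1, h2⟩, h3, h4⟩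
        exact ⟨⟨h1, h3⟩, h2, h4⟩
      · rintro ⟨⟨h1, h3⟩, h2, h4⟩
        refine ⟨⟨?_, h1, h2⟩, h3, h4⟩
        rintro rfl
        exact hIK ⟨h3, h4⟩
    calc μ[proj ψ I J | latentAlg ξ η ζ K L]
        =ᵐ[μ] μ[ψ I J | latentAlg ξ η ζ K L] -
          μ[∑ P ∈ (I.powerset ×ˢ J.powerset).erase (I, J), proj ψ P.1 P.2 |
            latentAlg ξ η ζ K L] := by
          rw [proj_eq ψ I J]
          exact condExp_sub hψint (integrable_finset_sum' _ hint) _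
      _ =ᵐ[μ] ψ (I ∩ K) (J ∩ L) - ∑ P ∈ (I.powerset ×ˢ J.powerset).erase (I, J),
            μ[proj ψ P.1 P.2 | latentAlg ξ η ζ K L] :=
          (condexp_psi hmodel hψ I J K L hI hJ).sub (condExp_finset_sum hint _)
      _ =ᵐ[μ] ψ (I ∩ K) (J ∩ L) - ∑ P ∈ (I.powerset ×ˢ J.powerset).erase (I, J),
            (if P.1 ⊆ K ∧ P.2 ⊆ L then proj ψ P.1 P.2 else 0) :=
          EventuallyEq.rfl.sub (sum_ae_eq _ _ _ key)
      _ =ᵐ[μ] 0 := by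
          rw [← Finset.sum_filter, hset, sum_proj, sub_self]

lemma integral_proj_zero (hmodel : Model μ ξ η ζ φ Y) (hψ : IsCondExpFamily μ ξ η ζ h Y ψ)
    {I J : Finset ℕ} (hI : I.card ≤ p) (hJ : J.card ≤ q)
    (hne : I ≠ ∅ ∨ J ≠ ∅) : ∫ ω, proj ψ I J ω ∂μ = 0 := by
  have h0 := condexp_proj_zero hmodel hψ (I.card + J.card + 1) I J ∅ ∅ (by omega) hI hJ
    (by
      rintro ⟨h1, h2⟩
      rcases hne with hne | hne
      · exact hne (Finset.subset_empty.mp h1)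
      · exact hne (Finset.subset_empty.mp h2))
  have hbot : latentAlg ξ η ζ (∅ : Finset ℕ) ∅ = (⊥ : MeasurableSpace Ω) := by
    simp [latentAlg]
  rw [hbot, condExp_bot] at h0
  obtain ⟨ω, hω⟩ := h0.exists
  exact hω

lemma covar_zero_of_not_sub (hmodel : Model μ ξ η ζ φ Y)
    {p₁ q₁ p₂ q₂ : ℕ} {h₁ : (Fin p₁ → Fin q₁ → ℝ) → ℝ} {h₂ : (Fin p₂ → Fin q₂ → ℝ) → ℝ}
    {ψ₁ ψ₂ : Finset ℕ → Finset ℕ → Ω → ℝ}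
    (hψ₁ : IsCondExpFamily μ ξ η ζ h₁ Y ψ₁) (hψ₂ : IsCondExpFamily μ ξ η ζ h₂ Y ψ₂)
    {I₁ J₁ I₂ J₂ : Finset ℕ} (hI₁ : I₁.card ≤ p₁) (hJ₁ : J₁.card ≤ q₁)
    (hI₂ : I₂.card ≤ p₂) (hJ₂ : J₂.card ≤ q₂)
    (hnot : ¬(I₁ ⊆ I₂ ∧ J₁ ⊆ J₂)) :
    covar μ (proj ψ₁ I₁ J₁) (proj ψ₂ I₂ J₂) = 0 := by
  have hne0 : I₁ ≠ ∅ ∨ J₁ ≠ ∅ := by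
    by_contra hc
    push_neg at hc
    refine hnot ?_
    rw [hc.1, hc.2]
    exact ⟨Finset.empty_subset _, Finset.empty_subset _⟩
  have ha : ∫ x, proj ψ₁ I₁ J₁ x ∂μ = 0 := integral_proj_zero hmodel hψ₁ hI₁ hJ₁ hne0
  unfold covar
  rw [ha]
  by_cases hint : Integrable (fun ω => (proj ψ₁ I₁ J₁ ω - 0) *
      (proj ψ₂ I₂ J₂ ω - ∫ x, proj ψ₂ I₂ J₂ x ∂μ)) μ
  swap
  · exact integral_undef hint
  · set b := ∫ x, proj ψ₂ I₂ J₂ x ∂μ with hb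
    have hm : latentAlg ξ η ζ I₂ J₂ ≤ mΩ := latentAlg_le hmodel I₂ J₂
    haveI : SigmaFinite (μ.trim hm) := inferInstance
    obtain ⟨g₂, hg₂m, hg₂i, hg₂e⟩ := proj_meas hmodel hψ₂ (I₂.card + J₂.card + 1) I₂ J₂
      (by omega) hI₂ hJ₂
    obtain ⟨g₁, hg₁m, hg₁i, hg₁e⟩ := proj_meas hmodel hψ₁ (I₁.card + J₁.card + 1) I₁ J₁
      (by omega) hI₁ hJ₁
    have hX₁int : Integrable (proj ψ₁ I₁ J₁) μ := hg₁i.congr hg₁e.symm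
    have hcz : μ[proj ψ₁ I₁ J₁ | latentAlg ξ η ζ I₂ J₂] =ᵐ[μ] 0 :=
      condexp_proj_zero hmodel hψ₁ (I₁.card + J₁.card + 1) I₁ J₁ I₂ J₂ (by omega) hI₁ hJ₁ hnot
    set f2 : Ω → ℝ := fun ω => g₂ ω - b with hf2
    have hf2m : StronglyMeasurable[latentAlg ξ η ζ I₂ J₂] f2 :=
      hg₂m.sub stronglyMeasurable_const
    have heq : (fun ω => (proj ψ₁ I₁ J₁ ω - 0) * (proj ψ₂ I₂ J₂ ω - b)) =ᵐ[μ]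
        f2 * proj ψ₁ I₁ J₁ := by
      filter_upwards [hg₂e] with ω hω
      simp only [Pi.mul_apply, hf2, sub_zero, hω]
      ring
    have hint' : Integrable (f2 * proj ψ₁ I₁ J₁) μ := hint.congr heq
    rw [integral_congr_ae heq, ← integral_condExp hm (μ := μ)]
    have hpull : μ[f2 * proj ψ₁ I₁ J₁ | latentAlg ξ η ζ I₂ J₂] =ᵐ[μ]
        f2 * μ[proj ψ₁ I₁ J₁ | latentAlg ξ η ζ I₂ J₂] :=
      condExp_mul_of_stronglyMeasurable_left hf2m hint' hX₁int
    have hz : μ[f2 * proj ψ₁ I₁ J₁ | latentAlg ξ η ζ I₂ J₂] =ᵐ[μ] 0 := by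
      refine hpull.trans ?_
      filter_upwards [hcz] with ω hω
      simp [hω]
    rw [integral_congr_ae hz]
    simp

end Kernel


/-- orthogonality of projections across levels: if `(r₁,c₁) ≠ (r₂,c₂)`,
then `Cov(p^{r₁,c₁}h₁(Y_{I₁,J₁}), p^{r₂,c₂}h₂(Y_{I₂,J₂})) = 0`. -/
theorem stmt_1
    [MeasurableSpace Ω] (μ : Measure Ω) [IsProbabilityMeasure μ]
    (ξ η : ℕ → Ω → ℝ) (ζ : ℕ → ℕ → Ω → ℝ) (φ : ℝ → ℝ → ℝ → ℝ) (Y : ℕ → ℕ → Ω → ℝ)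
    (hmodel : Model μ ξ η ζ φ Y)
    (p₁ q₁ p₂ q₂ : ℕ)
    (h₁ : (Fin p₁ → Fin q₁ → ℝ) → ℝ) (h₂ : (Fin p₂ → Fin q₂ → ℝ) → ℝ)
    (hsym₁ : SymKernel p₁ q₁ h₁) (hsym₂ : SymKernel p₂ q₂ h₂)
    (hsq₁ : Integrable (fun ω => (ker h₁ Y (Finset.range p₁) (Finset.range q₁) ω) ^ 2) μ)
    (hsq₂ : Integrable (fun ω => (ker h₂ Y (Finset.range p₂) (Finset.range q₂) ω) ^ 2) μ)
    (ψ₁ ψ₂ : Finset ℕ → Finset ℕ → Ω → ℝ)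
    (hψ₁ : IsCondExpFamily μ ξ η ζ h₁ Y ψ₁) (hψ₂ : IsCondExpFamily μ ξ η ζ h₂ Y ψ₂)
    (r₁ c₁ r₂ c₂ : ℕ) (hle₁ : (r₁, c₁) ≤ (p₁, q₁)) (hle₂ : (r₂, c₂) ≤ (p₂, q₂))
    (hne : (r₁, c₁) ≠ (r₂, c₂))
    (I₁ J₁ I₂ J₂ : Finset ℕ) (hI₁ : I₁.card = r₁) (hJ₁ : J₁.card = c₁)
    (hI₂ : I₂.card = r₂) (hJ₂ : J₂.card = c₂) :
    covar μ (proj ψ₁ I₁ J₁) (proj ψ₂ I₂ J₂) = 0 := by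
  have hI₁' : I₁.card ≤ p₁ := by rw [hI₁]; exact hle₁.1
  have hJ₁' : J₁.card ≤ q₁ := by rw [hJ₁]; exact hle₁.2
  have hI₂' : I₂.card ≤ p₂ := by rw [hI₂]; exact hle₂.1
  have hJ₂' : J₂.card ≤ q₂ := by rw [hJ₂]; exact hle₂.2
  have hIJ : ¬(I₁ ⊆ I₂ ∧ J₁ ⊆ J₂) ∨ ¬(I₂ ⊆ I₁ ∧ J₂ ⊆ J₁) := by
    by_contra hc
    push_neg at hc
    obtain ⟨⟨ha1, ha2⟩, hb1, hb2⟩ := hc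
    apply hne
    rw [← hI₁, ← hJ₁, ← hI₂, ← hJ₂, subset_antisymm ha1 hb1, subset_antisymm ha2 hb2]
  rcases hIJ with hnot | hnot
  · exact covar_zero_of_not_sub hmodel hψ₁ hψ₂ hI₁' hJ₁' hI₂' hJ₂' hnot
  · rw [covar_comm]
    exact covar_zero_of_not_sub hmodel hψ₂ hψ₁ hI₂' hJ₂' hI₁' hJ₁' hnot

end RCEU
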